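/- Conversely, if E is an extension of (W,D) with generating default set Δ = GD(W,D,E), then Δ is grounded, every δ ∈ Δ satisfies Prereq(δ) ∈ E and ¬β ∉ E for each justification β of δ, and every δ ∈ D \ Δ satisfies Prereq(δ) ∉ E or ¬β ∈ E for some justification β of δ. -/

import Mathlib

/-- Propositional formulas over natural-number atoms. -/
inductive PForm where
  | atom : ℕ → PForm
  | neg : PForm → PForm
  | conj : PForm → PForm → PForm
  | disj : PForm → PForm → PForm
deriving DecidableEq

/-- Satisfaction of a formula under a valuation. -/
def PForm.sat (v : ℕ → Prop) : PForm → Prop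
  | .atom n => v n
  | .neg f => ¬ f.sat v
  | .conj f g => f.sat v ∧ g.sat v
  | .disj f g => f.sat v ∨ g.sat v

/-- Propositional deductive closure (semantic consequence). -/
def Th (S : Set PForm) : Set PForm :=
  {φ | ∀ v : ℕ → Prop, (∀ ψ ∈ S, ψ.sat v) → φ.sat v}

/-- Propositional entailment `S ⊢ φ`. -/
def Entails (S : Set PForm) (φ : PForm) : Prop := φ ∈ Th S

/-- A default rule (α : β₁,…,βₙ / γ). -/
structure DRule where
  prereq : PForm
  justifs : List PForm
  conseq : PForm

/-- Consequents of a set of defaults. -/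
def Conseq (Δ : Set DRule) : Set PForm := DRule.conseq '' Δ

/-- The defining properties of Γ(S): `T` contains `W`, is deductively closed,
and is closed under defaults applicable w.r.t. `S`. -/
def GammaClosed (W : Set PForm) (D : Set DRule) (S T : Set PForm) : Prop :=
  W ⊆ T ∧ Th T = T ∧
  ∀ δ ∈ D, δ.prereq ∈ T → (∀ β ∈ δ.justifs, PForm.neg β ∉ S) → δ.conseq ∈ T

/-- Γ(S): the smallest set satisfying `GammaClosed`. -/
def Gamma (W : Set PForm) (D : Set DRule) (S : Set PForm) : Set PForm :=
  ⋂₀ {T | GammaClosed W D S T}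

/-- Reiter extension: fixed point of Γ. -/
def IsExtension (W : Set PForm) (D : Set DRule) (E : Set PForm) : Prop :=
  Gamma W D E = E

/-- Generating default set of `E`. -/
def GD (W : Set PForm) (D : Set DRule) (E : Set PForm) : Set DRule :=
  {δ ∈ D | δ.prereq ∈ E ∧ ∀ β ∈ δ.justifs, PForm.neg β ∉ E}

/-- Groundedness of a (finite) set of defaults. -/
def Grounded (W : Set PForm) (Δ : Set DRule) : Prop :=
  ∃ L : List DRule, L.Nodup ∧ {δ | δ ∈ L} = Δ ∧
    ∀ i (h : i < L.length),
      Entails (W ∪ Conseq {δ | δ ∈ L.take i}) (L.get ⟨i, h⟩).prereq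

lemma th_subset (S : Set PForm) : S ⊆ Th S := fun φ hφ v hv => hv φ hφ

lemma th_mono {S T : Set PForm} (h : S ⊆ T) : Th S ⊆ Th T :=
  fun φ hφ v hv => hφ v (fun ψ hψ => hv ψ (h hψ))

lemma th_idem (S : Set PForm) : Th (Th S) = Th S := by
  apply Set.Subset.antisymm
  · intro φ hφ v hv
    exact hφ v (fun ψ hψ => hψ v hv)
  · exact th_subset _

lemma gamma_closed (W : Set PForm) (D : Set DRule) (S : Set PForm) :
    GammaClosed W D S (Gamma W D S) := by
  refine ⟨?_, ?_, ?_⟩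
  · intro φ hφ T hT; exact hT.1 hφ
  · apply Set.Subset.antisymm
    · intro φ hφ T hT
      have h1 : Gamma W D S ⊆ T := fun x hx => hx T hT
      have h2 := th_mono h1 hφ
      rw [hT.2.1] at h2
      exact h2
    · exact th_subset _
  · intro δ hδ hpre hjust T hT
    exact hT.2.2 δ hδ (hpre T hT) hjust

lemma gamma_le (W : Set PForm) (D : Set DRule) (S T : Set PForm)
    (hT : GammaClosed W D S T) : Gamma W D S ⊆ T :=
  fun x hx => hx T hT

theorem gadel_correctness_only_if
    (W : Set PForm) (D : Set DRule) (hW : W.Finite) (hD : D.Finite)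
    (E : Set PForm) (Δ : Set DRule) (hΔ : Δ = GD W D E)
    (hE : IsExtension W D E) :
    Grounded W Δ ∧
    (∀ δ ∈ Δ, δ.prereq ∈ E ∧ ∀ β ∈ δ.justifs, PForm.neg β ∉ E) ∧
    (∀ δ ∈ D \ Δ, δ.prereq ∉ E ∨ ∃ β ∈ δ.justifs, PForm.neg β ∈ E) := by
  haveI := Classical.decEq DRule
  have hEc : GammaClosed W D E E := by
    have h := gamma_closed W D E
    rwa [hE] at h
  have hmin : ∀ T, GammaClosed W D E T → E ⊆ T := by
    intro T hT
    have := gamma_le W D E T hT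
    rwa [hE] at this
  have hΔD : Δ ⊆ D := by rw [hΔ]; exact fun δ hδ => hδ.1
  have hConsE : Conseq Δ ⊆ E := by
    rintro φ ⟨δ, hδ, rfl⟩
    rw [hΔ] at hδ
    exact hEc.2.2 δ hδ.1 hδ.2.1 hδ.2.2
  -- key: for any proper subset S of Δ, some default in Δ \ S is entailed
  have good : ∀ S : Set DRule, S ⊆ Δ → S ≠ Δ →
      ∃ δ, δ ∈ Δ ∧ δ ∉ S ∧ Entails (W ∪ Conseq S) δ.prereq := by
    intro S hSsub hSne
    by_contra hcon
    push_neg at hcon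
    set T := Th (W ∪ Conseq S) with hTdef
    have hTE : T ⊆ E := by
      have hsub : W ∪ Conseq S ⊆ E :=
        Set.union_subset hEc.1 ((Set.image_mono hSsub).trans hConsE)
      calc T ⊆ Th E := th_mono hsub
      _ = E := hEc.2.1
    have hTclosed : GammaClosed W D E T := by
      refine ⟨(Set.subset_union_left).trans (th_subset _), th_idem _, ?_⟩
      intro δ hδD hpre hjust
      have hδΔ : δ ∈ Δ := by
        rw [hΔ]; exact ⟨hδD, hTE hpre, hjust⟩
      by_cases hδS : δ ∈ S
      · exact th_subset _ (Set.mem_union_right _ ⟨δ, hδS, rfl⟩)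
      · exact absurd hpre (hcon δ hδΔ hδS)
    have hET : E ⊆ T := hmin T hTclosed
    obtain ⟨δ₀, hδ₀Δ, hδ₀S⟩ : ∃ δ₀, δ₀ ∈ Δ ∧ δ₀ ∉ S := by
      by_contra h
      push_neg at h
      exact hSne (Set.Subset.antisymm hSsub h)
    have : δ₀.prereq ∈ E := by rw [hΔ] at hδ₀Δ; exact hδ₀Δ.2.1
    exact hcon δ₀ hδ₀Δ hδ₀S (hET this)
  have hΔfin : Δ.Finite := hD.subset hΔD
  -- build the grounding list iteratively
  have build : ∀ n : ℕ, ∃ L : List DRule, L.Nodup ∧ (∀ δ ∈ L, δ ∈ Δ) ∧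
      (∀ i (h : i < L.length),
        Entails (W ∪ Conseq {δ | δ ∈ L.take i}) (L.get ⟨i, h⟩).prereq) ∧
      ({δ | δ ∈ L} = Δ ∨ n ≤ L.length) := by
    intro n
    induction n with
    | zero => exact ⟨[], by simp, by simp, by simp, Or.inr (Nat.zero_le _)⟩
    | succ n ih =>
      obtain ⟨L, hnd, hsub, hchain, hlast⟩ := ih
      by_cases hfull : {δ | δ ∈ L} = Δ
      · exact ⟨L, hnd, hsub, hchain, Or.inl hfull⟩
      · obtain ⟨δ, hδΔ, hδL, hent⟩ := good {δ | δ ∈ L} (fun x hx => hsub x hx) hfull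
        have hlen : n ≤ L.length := hlast.resolve_left hfull
        refine ⟨L ++ [δ], ?_, ?_, ?_, Or.inr (by simp [Nat.succ_le_succ hlen])⟩
        · simp only [List.nodup_append, List.nodup_cons, List.nodup_nil]
          refine ⟨hnd, by simp, ?_⟩
          intro a ha hab
          rintro hb rfl
          simp at hb
          exact hδL (hb ▸ ha)
        · intro x hx
          rcases List.mem_append.mp hx with h | h
          · exact hsub x h
          · simp at h; exact h ▸ hδΔ
        · intro i hi
          have hi' : i < L.length + 1 := by simpa using hi
          rcases Nat.lt_or_ge i L.length with hiL | hiL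
          · have htake : (L ++ [δ]).take i = L.take i := by
              rw [List.take_append]
              have : i - L.length = 0 := Nat.sub_eq_zero_of_le (Nat.le_of_lt hiL)
              simp [this]
            have hget : (L ++ [δ]).get ⟨i, hi⟩ = L.get ⟨i, hiL⟩ := by
              simp [List.get_eq_getElem, List.getElem_append, hiL]
            rw [htake, hget]
            exact hchain i hiL
          · have hieq : i = L.length := by omega
            subst hieq
            have htake : (L ++ [δ]).take L.length = L := List.take_left
            have hget : (L ++ [δ]).get ⟨L.length, hi⟩ = δ := by
              simp [List.get_eq_getElem, List.getElem_append_right (Nat.le_refl L.length)]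
            rw [htake, hget]
            exact hent
  obtain ⟨L, hnd, hsub, hchain, hlast⟩ := build (hΔfin.toFinset.card + 1)
  have hLset : {δ | δ ∈ L} = Δ := by
    rcases hlast with h | h
    · exact h
    · exfalso
      have hle : L.length ≤ hΔfin.toFinset.card := by
        have hcard : L.toFinset.card = L.length := List.toFinset_card_of_nodup hnd
        rw [← hcard]
        apply Finset.card_le_card
        intro x hx
        rw [List.mem_toFinset] at hx
        rw [Set.Finite.mem_toFinset]
        exact hsub x hx
      omega
  refine ⟨⟨L, hnd, hLset, hchain⟩, ?_, ?_⟩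
  · intro δ hδ
    rw [hΔ] at hδ
    exact hδ.2
  · rintro δ ⟨hδD, hδΔ⟩
    rw [hΔ] at hδΔ
    by_cases hpre : δ.prereq ∈ E
    · right
      by_contra h
      push_neg at h
      exact hδΔ ⟨hδD, hpre, fun β hβ => h β hβ⟩
    · exact Or.inl hpre
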